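/- The function u(x,t) = √(2M/t) g(x/√(2Mt), R) with g(z,R) = ((e^R - 1)/(2√R)) e^{-z²R} / (√π + (e^R-1) ∫_{z√R}^{∞} e^{-ξ²} dξ) and R = M/(2ν) solves the Burgers equation u_t + u u_x = ν u_{xx} for t > 0. -/

import Mathlib

/-!
Whitham's solution is the Cole–Hopf transform `u = -2ν ψ / φ` of the heat solution
`φ(x, t) = √π + (e^R - 1) ∫_{x/√(4νt)}^∞ e^{-ξ²} dξ`, where `ψ = ∂ₓφ = -(e^R - 1) e^{-x²/(4νt)} / √(4νt)`
is a multiple of the heat kernel. Whenever `∂ₓφ = ψ`, `∂ₜφ = ν ∂ₓψ`, `∂ₜψ = ν ∂ₓ²ψ` and `φ ≠ 0`, the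
transform solves Burgers' equation by direct differentiation; here `φ ≥ √π` because `e^R - 1 > 0`.
With `M = 2νR` one has `√(2Mt) = √R √(4νt)`, which turns `√(2M/t) g(x/√(2Mt))` into `-2ν ψ / φ`.
-/

open Real MeasureTheory Set Filter Topology

theorem hasDerivAt_integral_Ioi {E : Type*} [NormedAddCommGroup E] [NormedSpace ℝ E]
    [CompleteSpace E] {f : ℝ → E} (hf : Integrable f) {w : ℝ} (hw : ContinuousAt f w) :
    HasDerivAt (fun a => ∫ x in Ioi a, f x) (-f w) w := by
  have htail : (fun a => ∫ x in Ioi a, f x) = fun a => (∫ x in Ioi 0, f x) - ∫ x in 0..a, f x :=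
    funext fun a => eq_sub_of_add_eq'
      (intervalIntegral.integral_interval_add_Ioi hf.integrableOn hf.integrableOn)
  rw [htail]
  exact (intervalIntegral.integral_hasDerivAt_right hf.intervalIntegrable
    hf.aestronglyMeasurable.stronglyMeasurableAtFilter hw).const_sub _

theorem burgers_of_coleHopf {ν x t : ℝ} {u φ ψ : ℝ → ℝ → ℝ} {ψx : ℝ → ℝ} {ψxx : ℝ}
    (hu : ∀ᶠ s in 𝓝 t, ∀ y, u y s = -2 * ν * ψ y s / φ y s)
    (hφ : ∀ y, φ y t ≠ 0)
    (hφx : ∀ y, HasDerivAt (φ · t) (ψ y t) y)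
    (hψx : ∀ y, HasDerivAt (ψ · t) (ψx y) y)
    (hψxx : HasDerivAt ψx ψxx x)
    (hφt : HasDerivAt (φ x ·) (ν * ψx x) t)
    (hψt : HasDerivAt (ψ x ·) (ν * ψxx) t) :
    deriv (fun s => u x s) t + u x t * deriv (fun y => u y t) x
      = ν * deriv (fun y => deriv (fun z => u z t) y) x := by
  have hut := ((hψt.const_mul (-2 * ν)).fun_div hφt (hφ x)).congr_of_eventuallyEq
    (hu.mono fun s hs => hs x)
  have hux : ∀ y, HasDerivAt (u · t)
      (-2 * ν * (ψx y * φ y t - ψ y t ^ 2) / φ y t ^ 2) y := by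
    intro y
    rw [funext hu.self_of_nhds]
    exact (((hψx y).const_mul (-2 * ν)).fun_div (hφx y) (hφ y)).congr_deriv (by ring)
  have huxx := (((hψxx.fun_mul (hφx x)).fun_sub ((hψx x).fun_pow 2)).const_mul (-2 * ν)).fun_div
    ((hφx x).fun_pow 2) (pow_ne_zero 2 (hφ x))
  rw [hut.deriv, (hux x).deriv, funext fun y => (hux y).deriv]
  beta_reduce
  rw [huxx.deriv, hu.self_of_nhds x]
  have := hφ x
  field_simp
  ring

namespace Whitham

noncomputable def gaussTail (w : ℝ) : ℝ := ∫ ξ in Ioi w, exp (-ξ ^ 2)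

theorem gaussTail_nonneg (w : ℝ) : 0 ≤ gaussTail w :=
  setIntegral_nonneg measurableSet_Ioi fun _ _ => (exp_pos _).le

theorem hasDerivAt_gaussTail (w : ℝ) : HasDerivAt gaussTail (-exp (-w ^ 2)) w :=
  hasDerivAt_integral_Ioi (by simpa using integrable_exp_neg_mul_sq one_pos)
    (by fun_prop)

variable (ν c : ℝ)

noncomputable def potential (y t : ℝ) : ℝ := √π + c * gaussTail (y / √(4 * ν * t))

noncomputable def kernel (y t : ℝ) : ℝ := -c * exp (-(y / √(4 * ν * t)) ^ 2) / √(4 * ν * t)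

theorem potential_pos {c : ℝ} (hc : 0 ≤ c) (y t : ℝ) : 0 < potential ν c y t :=
  add_pos_of_pos_of_nonneg (sqrt_pos.2 pi_pos) (mul_nonneg hc (gaussTail_nonneg _))

section space

variable (t : ℝ)

local notation "s" => √(4 * ν * t)

theorem hasDerivAt_potential_space (y : ℝ) :
    HasDerivAt (potential ν c · t) (kernel ν c y t) y := by
  have := ((hasDerivAt_gaussTail (y / s)).comp y ((hasDerivAt_id y).div_const s)).const_mul c
  exact (this.const_add √π).congr_deriv (by simp [kernel]; ring)

theorem hasDerivAt_gaussian_space (y : ℝ) :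
    HasDerivAt (fun y => exp (-(y / s) ^ 2)) (-2 * (y / s) * exp (-(y / s) ^ 2) / s) y := by
  have := (((hasDerivAt_id y).div_const s).fun_pow 2).neg.exp
  exact this.congr_deriv (by simp; ring)

theorem hasDerivAt_kernel_space (y : ℝ) :
    HasDerivAt (kernel ν c · t) (2 * c * (y / s) * exp (-(y / s) ^ 2) / s ^ 2) y :=
  (((hasDerivAt_gaussian_space ν t y).const_mul (-c)).div_const s).congr_deriv (by ring)

theorem hasDerivAt_deriv_kernel_space (x : ℝ) :
    HasDerivAt (fun y => 2 * c * (y / s) * exp (-(y / s) ^ 2) / s ^ 2)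
      (2 * c * (1 - 2 * (x / s) ^ 2) * exp (-(x / s) ^ 2) / s ^ 3) x := by
  have := ((((hasDerivAt_id x).div_const s).const_mul (2 * c)).fun_mul
    (hasDerivAt_gaussian_space ν t x)).div_const (s ^ 2)
  exact this.congr_deriv (by simp; ring)

end space

section time

variable {ν} {t : ℝ}

theorem hasDerivAt_sqrt_time (hν : 0 < ν) (ht : 0 < t) :
    HasDerivAt (fun τ => √(4 * ν * τ)) (√(4 * ν * t) / (2 * t)) t := by
  have h4 : 0 < 4 * ν * t := by positivity
  refine (((hasDerivAt_id t).const_mul (4 * ν)).sqrt h4.ne').congr_deriv ?_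
  have := sq_sqrt h4.le
  field_simp
  simp
  linarith

theorem hasDerivAt_similarity_time (hν : 0 < ν) (ht : 0 < t) (x : ℝ) :
    HasDerivAt (fun τ => x / √(4 * ν * τ)) (-(x / √(4 * ν * t)) / (2 * t)) t := by
  have hs : 0 < √(4 * ν * t) := sqrt_pos.2 (by positivity)
  refine ((hasDerivAt_const t x).fun_div (hasDerivAt_sqrt_time hν ht) hs.ne').congr_deriv ?_
  field_simp
  ring

theorem hasDerivAt_potential_time (hν : 0 < ν) (ht : 0 < t) (x : ℝ) :
    HasDerivAt (potential ν c x ·)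
      (ν * (2 * c * (x / √(4 * ν * t)) * exp (-(x / √(4 * ν * t)) ^ 2) / √(4 * ν * t) ^ 2)) t := by
  have := (((hasDerivAt_gaussTail _).comp t (hasDerivAt_similarity_time hν ht x)).const_mul
    c).const_add √π
  refine this.congr_deriv ?_
  rw [sq_sqrt (by positivity)]
  field_simp
  ring

theorem hasDerivAt_kernel_time (hν : 0 < ν) (ht : 0 < t) (x : ℝ) :
    HasDerivAt (kernel ν c x ·) (ν * (2 * c * (1 - 2 * (x / √(4 * ν * t)) ^ 2)
      * exp (-(x / √(4 * ν * t)) ^ 2) / √(4 * ν * t) ^ 3)) t := by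
  have hs : 0 < √(4 * ν * t) := sqrt_pos.2 (by positivity)
  have := (((hasDerivAt_similarity_time hν ht x).fun_pow 2).fun_neg.exp.const_mul (-c)).fun_div
    (hasDerivAt_sqrt_time hν ht) hs.ne'
  refine this.congr_deriv ?_
  have hsq : √(4 * ν * t) ^ 2 = 4 * ν * t := sq_sqrt (by positivity)
  generalize √(4 * ν * t) = s at hs hsq ⊢
  obtain rfl : t = s ^ 2 / (4 * ν) := by field_simp; linarith
  have := hs.ne'
  norm_num
  field_simp
  ring

end time

theorem profile_eq_coleHopf {M ν R τ : ℝ} (hM : 0 < M) (hν : 0 < ν) (hR : R = M / (2 * ν))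
    (hτ : 0 < τ) (y : ℝ) :
    √(2 * M / τ) * ((exp R - 1) / (2 * √R) * exp (-((y / √(2 * M * τ)) ^ 2 * R))
      / (√π + (exp R - 1) * ∫ ξ in Ioi (y / √(2 * M * τ) * √R), exp (-(ξ ^ 2))))
    = -2 * ν * kernel ν (exp R - 1) y τ / potential ν (exp R - 1) y τ := by
  have hR₀ : 0 < R := hR ▸ by positivity
  have hM₂ : 2 * M = R * (4 * ν) := by rw [hR]; field_simp; ring
  have hsq : √(4 * ν * τ) ^ 2 = 4 * ν * τ := sq_sqrt (by positivity)
  have h₁ : √(2 * M * τ) = √R * √(4 * ν * τ) := by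
    rw [← sqrt_mul hR₀.le, hM₂]; ring_nf
  have h₂ : √(2 * M / τ) = √R * (4 * ν / √(4 * ν * τ)) := by
    rw [← sqrt_sq (by positivity : 0 ≤ 4 * ν / √(4 * ν * τ)), ← sqrt_mul hR₀.le, div_pow, hsq,
      hM₂]
    congr 1
    field_simp
  have h₃ : y / (√R * √(4 * ν * τ)) * √R = y / √(4 * ν * τ) := by field_simp
  have h₄ : (y / (√R * √(4 * ν * τ))) ^ 2 * R = (y / √(4 * ν * τ)) ^ 2 := by
    rw [← h₃, mul_pow, sq_sqrt hR₀.le]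
  rw [h₁, h₂, h₃, h₄, ← gaussTail, ← potential]
  have := potential_pos ν (sub_nonneg.2 (one_le_exp hR₀.le)) y τ
  simp only [kernel]
  field_simp
  ring

end Whitham

/-- Whitham's self-similar solution `u(x,t) = √(2M/t) g(x/√(2Mt), R)` with
`R = M/(2ν)` solves the Burgers equation `u_t + u u_x = ν u_xx` for `t > 0`. -/
theorem whitham_solves_burgers (M ν : ℝ) (hM : 0 < M) (hν : 0 < ν)
    (R : ℝ) (hR : R = M / (2 * ν))
    (g : ℝ → ℝ)
    (hg : ∀ z : ℝ, g z =
      ((Real.exp R - 1) / (2 * Real.sqrt R)) * Real.exp (-(z ^ 2 * R))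
        / (Real.sqrt π
            + (Real.exp R - 1) * ∫ ξ in Set.Ioi (z * Real.sqrt R), Real.exp (-(ξ ^ 2))))
    (u : ℝ → ℝ → ℝ)
    (hu : ∀ x t : ℝ, u x t = Real.sqrt (2 * M / t) * g (x / Real.sqrt (2 * M * t))) :
    ∀ (x t : ℝ), 0 < t →
      deriv (fun s => u x s) t + u x t * deriv (fun y => u y t) x
        = ν * deriv (fun y => deriv (fun z => u z t) y) x := by
  intro x t ht
  have hc : 0 ≤ exp R - 1 := sub_nonneg.2 (one_le_exp (hR ▸ by positivity))
  refine burgers_of_coleHopf (φ := Whitham.potential ν (exp R - 1))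
    (ψ := Whitham.kernel ν (exp R - 1)) ?_ (fun y => (Whitham.potential_pos ν hc y t).ne')
    (Whitham.hasDerivAt_potential_space ν _ t)
    (Whitham.hasDerivAt_kernel_space ν _ t) (Whitham.hasDerivAt_deriv_kernel_space ν _ t x)
    (Whitham.hasDerivAt_potential_time _ hν ht x) (Whitham.hasDerivAt_kernel_time _ hν ht x)
  filter_upwards [Ioi_mem_nhds ht] with τ hτ y
  rw [hu, hg, Whitham.profile_eq_coleHopf hM hν hR hτ]
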